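/- arXiv:1506.08050 — 3 statements merged into one kernel-verified Lean document; each statement's English description precedes it below -/
import Mathlib

section
/- Let F_q be a finite field with q elements and let r be an integer with 0 < r < q−1. Then in the polynomial ring F_q[x,y], Σ_{λ ∈ F_q} λ^{q−1−r} (x + λy)^r = − y^r, where by convention 0^{q−1−r} = 0. -/
open Finset MvPolynomial

lemma sum_pow_card_sub_one_aux (F : Type*) [Field F] [Fintype F]
    (h : 1 < Fintype.card F) :
    ∑ x : F, x ^ (Fintype.card F - 1) = -1 := by
  classical
  have hcast : (Fintype.card F : F) = 0 := FiniteField.cast_card_eq_zero F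
  calc ∑ x : F, x ^ (Fintype.card F - 1)
      = ∑ x : F, (1 - if x = 0 then 1 else 0) := by
        apply Finset.sum_congr rfl
        intro x _
        split_ifs with hx
        · simp [hx, zero_pow (Nat.sub_ne_zero_of_lt h)]
        · simp [FiniteField.pow_card_sub_one_eq_one x hx]
    _ = -1 := by
        rw [Finset.sum_sub_distrib, Finset.sum_const, Finset.sum_ite_eq'
          Finset.univ (0 : F) (fun _ => (1 : F))]
        simp [hcast]

theorem stmt5 (F : Type*) [Field F] [Fintype F] (q : ℕ) (hq : Fintype.card F = q)
    (r : ℕ) (hr0 : 0 < r) (hr : r < q - 1) :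
    ∑ l : F, MvPolynomial.C (l ^ (q - 1 - r)) *
      (MvPolynomial.X 0 + MvPolynomial.C l * MvPolynomial.X 1 :
        MvPolynomial (Fin 2) F) ^ r
    = - (MvPolynomial.X 1 : MvPolynomial (Fin 2) F) ^ r := by
  classical
  subst hq
  set q := Fintype.card F with hq
  have hq2 : 1 < q := by omega
  simp_rw [add_pow, Finset.mul_sum]
  rw [Finset.sum_comm]
  have key : ∀ k ∈ Finset.range (r + 1),
      (∑ l : F, MvPolynomial.C (l ^ (q - 1 - r)) *
        ((MvPolynomial.X 0 : MvPolynomial (Fin 2) F) ^ k *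
          (MvPolynomial.C l * MvPolynomial.X 1) ^ (r - k) * (r.choose k : MvPolynomial (Fin 2) F)))
      = if k = 0 then -(MvPolynomial.X 1 : MvPolynomial (Fin 2) F) ^ r else 0 := by
    intro k hk
    rw [Finset.mem_range] at hk
    have hkr : k ≤ r := by omega
    have h1 : ∀ l : F, MvPolynomial.C (l ^ (q - 1 - r)) *
        ((MvPolynomial.X 0 : MvPolynomial (Fin 2) F) ^ k *
          (MvPolynomial.C l * MvPolynomial.X 1) ^ (r - k) * (r.choose k : MvPolynomial (Fin 2) F))
        = MvPolynomial.C (l ^ (q - 1 - k)) *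
        ((MvPolynomial.X 0 : MvPolynomial (Fin 2) F) ^ k *
          (MvPolynomial.X 1) ^ (r - k) * (r.choose k : MvPolynomial (Fin 2) F)) := by
      intro l
      rw [mul_pow, ← MvPolynomial.C_pow, show (q - 1 - k) = (q - 1 - r) + (r - k) by omega,
        pow_add, map_mul]
      ring
    simp_rw [h1]
    rw [← Finset.sum_mul, ← map_sum]
    rcases Nat.eq_zero_or_pos k with hk0 | hk0
    · subst hk0
      simp only [Nat.sub_zero, if_true]
      rw [sum_pow_card_sub_one_aux F hq2]
      simp
    · rw [if_neg (by omega)]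
      rw [FiniteField.sum_pow_lt_card_sub_one F (q - 1 - k) (by omega)]
      simp
  rw [Finset.sum_congr rfl key, Finset.sum_ite_eq' (Finset.range (r + 1)) 0]
  simp
end

section
/- Let F_q be a finite field with q elements. Then in the polynomial ring F_q[x,y], Σ_{λ ∈ F_q} (x + λy)^{q−1} = − y^{q−1}. -/
/-! Expand `(a + λ b)^(q-1)` binomially and sum over `λ` first: the power sum `∑ λ^j` over `F_q`
vanishes for `j < q - 1` and equals `-1` for `j = q - 1`, so only the term `(λ b)^(q-1)` survives. -/

open Finset

theorem FiniteField.sum_pow_card_sub_one (K : Type*) [Field K] [Fintype K] :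
    ∑ x : K, x ^ (Fintype.card K - 1) = -1 := by
  classical
  have hpos : 0 < Fintype.card K - 1 := Nat.sub_pos_of_lt Fintype.one_lt_card
  calc ∑ x : K, x ^ (Fintype.card K - 1)
      = ∑ x ∈ univ.erase (0 : K), 1 := by
        rw [← add_sum_erase _ _ (mem_univ 0), zero_pow hpos.ne', zero_add]
        exact sum_congr rfl fun x hx => FiniteField.pow_card_sub_one_eq_one x (ne_of_mem_erase hx)
    _ = -1 := by
        rw [sum_const, card_erase_of_mem (mem_univ 0), card_univ, nsmul_one,
          Nat.cast_pred Fintype.card_pos, FiniteField.cast_card_eq_zero, zero_sub]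

theorem FiniteField.sum_add_algebraMap_mul_pow_card_sub_one {K A : Type*} [Field K] [Fintype K]
    [CommRing A] [Algebra K A] (a b : A) :
    ∑ l : K, (a + algebraMap K A l * b) ^ (Fintype.card K - 1) = -b ^ (Fintype.card K - 1) := by
  set n := Fintype.card K - 1
  have hpos : 0 < n := Nat.sub_pos_of_lt Fintype.one_lt_card
  have power_sum : ∀ k ∈ range (n + 1),
      ∑ l : K, a ^ k * (algebraMap K A l * b) ^ (n - k) * (n.choose k : A)
        = if k = 0 then -b ^ n else 0 := by
    intro k _
    have hfactor : ∑ l : K, a ^ k * (algebraMap K A l * b) ^ (n - k) * (n.choose k : A)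
        = algebraMap K A (∑ l : K, l ^ (n - k)) * (a ^ k * b ^ (n - k) * n.choose k) := by
      rw [map_sum, sum_mul]
      refine sum_congr rfl fun l _ => ?_
      rw [mul_pow, map_pow]
      ring
    rw [hfactor]
    rcases eq_or_ne k 0 with rfl | hk
    · simp [n, FiniteField.sum_pow_card_sub_one]
    · have hlt : n - k < n := by omega
      simp [FiniteField.sum_pow_lt_card_sub_one K _ hlt, hk]
  rw [sum_congr rfl fun l _ => add_pow a _ n, sum_comm, sum_congr rfl power_sum,
    sum_ite_eq' (range (n + 1)) 0, if_pos (mem_range.mpr (Nat.succ_pos n))]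

theorem stmt6 (F : Type*) [Field F] [Fintype F] (q : ℕ) (hq : Fintype.card F = q) :
    ∑ l : F, (MvPolynomial.X 0 + MvPolynomial.C l * MvPolynomial.X 1 :
      MvPolynomial (Fin 2) F) ^ (q - 1)
    = - (MvPolynomial.X 1 : MvPolynomial (Fin 2) F) ^ (q - 1) := by
  subst hq
  exact FiniteField.sum_add_algebraMap_mul_pow_card_sub_one _ _
end

section
/- Let p be a prime and let a, b ∈ F_p with Teichmüller lifts [a], [b] ∈ Z_p (the unique lifts satisfying [x]^p = [x]). Then [a] + [b] − [a+b] ≡ −p · Σ_{s=1}^{p−1} (C(p,s)/p) [a]^s [b]^{p−s} (mod p^2). -/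
/-!
Since `[a] + [b] ≡ [a + b] (mod p)`, raising to the `p`-th power gives
`([a] + [b])^p ≡ [a + b]^p = [a + b] (mod p²)`. Expanding `([a] + [b])^p` binomially and using
`[a]^p = [a]`, `[b]^p = [b]` turns the left side into `[a] + [b] + p · Σ (C(p,s)/p) [a]^s [b]^(p-s)`.
-/

open Finset

theorem PadicInt.natCast_dvd_sub_iff_toZMod_eq {p : ℕ} [Fact p.Prime] {x y : ℤ_[p]} :
    (p : ℤ_[p]) ∣ x - y ↔ toZMod x = toZMod y := by
  rw [← Ideal.mem_span_singleton, ← maximalIdeal_eq_span_p, ← ker_toZMod, RingHom.mem_ker,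
    map_sub, sub_eq_zero]

theorem Nat.Prime.add_pow_eq_add_add_mul_sum_Icc {R : Type*} [CommSemiring R] {p : ℕ}
    (hp : p.Prime) (x y : R) :
    (x + y) ^ p = x ^ p + y ^ p +
      p * ∑ s ∈ Icc 1 (p - 1), ((p.choose s / p : ℕ) : R) * x ^ s * y ^ (p - s) := by
  have hIoo : Ioo 0 p = Icc 1 (p - 1) := by
    ext s
    simp only [mem_Ioo, mem_Icc]
    omega
  rw [add_pow_prime_eq' hp, hIoo]
  congr 2
  exact sum_congr rfl fun s _ => by ring

theorem Nat.Prime.sq_dvd_add_sub_add_mul_sum_of_pow_eq_self {R : Type*} [CommRing R] {p : ℕ}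
    (hp : p.Prime) {x y z : R} (hx : x ^ p = x) (hy : y ^ p = y) (hz : z ^ p = z)
    (hxyz : (p : R) ∣ x + y - z) :
    (p : R) ^ 2 ∣ x + y - z +
      p * ∑ s ∈ Icc 1 (p - 1), ((p.choose s / p : ℕ) : R) * x ^ s * y ^ (p - s) := by
  have hpow : (x + y) ^ p - z ^ p = x + y - z +
      p * ∑ s ∈ Icc 1 (p - 1), ((p.choose s / p : ℕ) : R) * x ^ s * y ^ (p - s) := by
    rw [hp.add_pow_eq_add_add_mul_sum_Icc, hx, hy, hz]
    ring
  simpa only [pow_one, hpow] using dvd_sub_pow_of_dvd_sub hxyz 1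

theorem stmt11 (p : ℕ) [hp : Fact p.Prime] (a b : ZMod p)
    (ta tb tab : ℤ_[p])
    (hta : ta ^ p = ta) (htb : tb ^ p = tb) (htab : tab ^ p = tab)
    (ha : PadicInt.toZMod ta = a) (hb : PadicInt.toZMod tb = b)
    (hab : PadicInt.toZMod tab = a + b) :
    (p : ℤ_[p]) ^ 2 ∣
      (ta + tb - tab +
        p * ∑ s ∈ Finset.Icc 1 (p - 1),
          ((p.choose s / p : ℕ) : ℤ_[p]) * ta ^ s * tb ^ (p - s)) := by
  have hcong : (p : ℤ_[p]) ∣ ta + tb - tab := by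
    rw [PadicInt.natCast_dvd_sub_iff_toZMod_eq, map_add, ha, hb, hab]
  exact hp.out.sq_dvd_add_sub_add_mul_sum_of_pow_eq_self hta htb htab hcong
end
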